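/- arXiv:math/9801119 — 2 statements merged into one kernel-verified Lean document; each statement's English description precedes it below -/
import Mathlib

section
/- Two closed geodesic lines on the square torus R²/Z² with primitive direction vectors (p,q) and (r,s), where (p,q) and (r,s) are not parallel, intersect in exactly |ps − qr| points. -/
/-- The projection from the plane to the square torus `ℝ²/ℤ²`. -/
noncomputable def torusProj : ℝ × ℝ → AddCircle (1 : ℝ) × AddCircle (1 : ℝ) :=
  fun v => ((v.1 : AddCircle (1 : ℝ)), (v.2 : AddCircle (1 : ℝ)))

/-- The closed geodesic line on the torus through (the class of) `x₀` with
direction vector `(p, q)`. -/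
noncomputable def torusLine (x₀ : ℝ × ℝ) (p q : ℤ) :
    Set (AddCircle (1 : ℝ) × AddCircle (1 : ℝ)) :=
  torusProj '' {w : ℝ × ℝ | ∃ t : ℝ, w = (x₀.1 + t * p, x₀.2 + t * q)}

lemma coe_eq_coe (x y : ℝ) : (x : AddCircle (1:ℝ)) = y ↔ ∃ m : ℤ, y = x + m := by
  rw [QuotientAddGroup.eq_iff_sub_mem, AddSubgroup.mem_zmultiples_iff]
  constructor
  · rintro ⟨m, hm⟩
    simp only [zsmul_eq_mul, mul_one] at hm
    exact ⟨-m, by push_cast; linarith⟩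
  · rintro ⟨m, hm⟩
    exact ⟨-m, by simp [hm]⟩

lemma torusProj_eq_iff (w w' : ℝ × ℝ) :
    torusProj w = torusProj w' ↔ ∃ m₁ m₂ : ℤ, w'.1 = w.1 + m₁ ∧ w'.2 = w.2 + m₂ := by
  simp only [torusProj, Prod.ext_iff, coe_eq_coe]
  constructor
  · rintro ⟨⟨m₁, h₁⟩, ⟨m₂, h₂⟩⟩; exact ⟨m₁, m₂, h₁, h₂⟩
  · rintro ⟨m₁, m₂, h₁, h₂⟩; exact ⟨⟨m₁, h₁⟩, ⟨m₂, h₂⟩⟩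

/-- Two closed geodesics on the square torus with primitive direction vectors
`(p,q)` and `(r,s)` that are not parallel intersect in exactly `|ps - qr|` points. -/
theorem torus_lines_intersection_count (x₀ y₀ : ℝ × ℝ) (p q r s : ℤ)
    (hpq : Int.gcd p q = 1) (hrs : Int.gcd r s = 1) (hnp : p * s - q * r ≠ 0) :
    (torusLine x₀ p q ∩ torusLine y₀ r s).ncard = (p * s - q * r).natAbs := by
  obtain ⟨a, b, hab⟩ : ∃ a b : ℤ, p * a + q * b = 1 := by
    refine ⟨Int.gcdA p q, Int.gcdB p q, ?_⟩
    have := Int.gcd_eq_gcd_ab p q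
    rw [hpq] at this; exact_mod_cast this.symm
  obtain ⟨c, d, hcd⟩ : ∃ c d : ℤ, s * c - r * d = 1 := by
    refine ⟨Int.gcdB r s, -Int.gcdA r s, ?_⟩
    have h := Int.gcd_eq_gcd_ab r s
    rw [hrs] at h
    have h2 : (1 : ℤ) = r * Int.gcdA r s + s * Int.gcdB r s := by exact_mod_cast h
    linarith
  have hD0 : (p : ℝ) * s - q * r ≠ 0 := by
    have : ((p * s - q * r : ℤ) : ℝ) ≠ 0 := Int.cast_ne_zero.mpr hnp
    push_cast at this; exact this
  set n : ℕ := (p * s - q * r).natAbs with hndef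
  haveI : NeZero n := ⟨Int.natAbs_ne_zero.mpr hnp⟩
  set F : ℤ → (AddCircle (1:ℝ) × AddCircle (1:ℝ)) :=
    fun j => torusProj
      (x₀.1 + (((s : ℝ) * (y₀.1 - x₀.1) - r * (y₀.2 - x₀.2) + j) / ((p : ℝ) * s - q * r)) * p,
       x₀.2 + (((s : ℝ) * (y₀.1 - x₀.1) - r * (y₀.2 - x₀.2) + j) / ((p : ℝ) * s - q * r)) * q)
    with hF
  -- the key algebraic identity: `F (s*m₁ - r*m₂)` lies on the second line
  have key : ∀ m₁ m₂ : ℤ, F (s * m₁ - r * m₂) =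
      torusProj (y₀.1 + (((q : ℝ) * (y₀.1 - x₀.1 + m₁) - p * (y₀.2 - x₀.2 + m₂))
                  / ((p : ℝ) * s - q * r)) * r,
                 y₀.2 + (((q : ℝ) * (y₀.1 - x₀.1 + m₁) - p * (y₀.2 - x₀.2 + m₂))
                  / ((p : ℝ) * s - q * r)) * s) := by
    intro m₁ m₂
    rw [hF, torusProj_eq_iff]
    refine ⟨-m₁, -m₂, ?_, ?_⟩ <;>
    · push_cast
      field_simp
      ring
  have hsub : Set.range F ⊆ torusLine x₀ p q ∩ torusLine y₀ r s := by
    rintro _ ⟨j, rfl⟩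
    constructor
    · exact ⟨_, ⟨_, rfl⟩, rfl⟩
    · have hj : j = s * (c * j) - r * (d * j) := by linear_combination (-j) * hcd
      rw [hj, key]
      exact ⟨_, ⟨_, rfl⟩, rfl⟩
  have hsup : torusLine x₀ p q ∩ torusLine y₀ r s ⊆ Set.range F := by
    rintro z ⟨⟨w, ⟨t, rfl⟩, rfl⟩, w', ⟨u, rfl⟩, hz⟩
    rw [torusProj_eq_iff] at hz
    obtain ⟨m₁, m₂, h₁, h₂⟩ := hz
    dsimp only at h₁ h₂
    refine ⟨s * m₁ - r * m₂, ?_⟩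
    rw [hF]
    have heq : t = ((s : ℝ) * (y₀.1 - x₀.1) - r * (y₀.2 - x₀.2) + (s * m₁ - r * m₂ : ℤ))
        / ((p : ℝ) * s - q * r) := by
      have e1 : t * p - u * r = (y₀.1 - x₀.1) + m₁ := by linarith
      have e2 : t * q - u * s = (y₀.2 - x₀.2) + m₂ := by linarith
      push_cast
      rw [eq_div_iff hD0]
      linear_combination (s : ℝ) * e1 - (r : ℝ) * e2
    rw [heq]
  have hiff : ∀ j j' : ℤ, F j = F j' ↔ (p * s - q * r) ∣ (j' - j) := by
    intro j j'
    rw [hF]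
    simp only [torusProj_eq_iff]
    constructor
    · rintro ⟨m₁, m₂, h₁, h₂⟩
      have d1 : (p * s - q * r) ∣ (j' - j) * p := by
        refine ⟨m₁, ?_⟩
        have hr : ((j' - j) * p : ℝ) = ((p * s - q * r : ℤ) : ℝ) * m₁ := by
          push_cast
          linear_combination ((p : ℝ) * s - q * r) * h₁ - (((j' : ℝ) - j) * p) * mul_inv_cancel₀ hD0
        exact_mod_cast hr
      have d2 : (p * s - q * r) ∣ (j' - j) * q := by
        refine ⟨m₂, ?_⟩
        have hr : ((j' - j) * q : ℝ) = ((p * s - q * r : ℤ) : ℝ) * m₂ := by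
          push_cast
          linear_combination ((p : ℝ) * s - q * r) * h₂ - (((j' : ℝ) - j) * q) * mul_inv_cancel₀ hD0
        exact_mod_cast hr
      have hcomb : (j' - j) = ((j' - j) * p) * a + ((j' - j) * q) * b := by
        linear_combination (j - j') * hab
      rw [hcomb]
      exact Dvd.dvd.add (d1.mul_right a) (d2.mul_right b)
    · rintro ⟨k, hk⟩
      have hk' : (j' : ℝ) = j + ((p : ℝ) * s - q * r) * k := by
        have : ((j' : ℤ) : ℝ) = ((j + (p * s - q * r) * k : ℤ) : ℝ) := by
          exact_mod_cast congrArg (Int.cast : ℤ → ℝ) (by linarith : j' = j + (p * s - q * r) * k)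
        push_cast at this
        linarith
      refine ⟨k * p, k * q, ?_, ?_⟩
      · rw [hk']
        push_cast
        linear_combination ((k : ℝ) * p) * mul_inv_cancel₀ hD0
      · rw [hk']
        push_cast
        linear_combination ((k : ℝ) * q) * mul_inv_cancel₀ hD0
  -- count the range of F
  set G : ZMod n → (AddCircle (1:ℝ) × AddCircle (1:ℝ)) := fun k => F k.val with hG
  have hdvd_iff : ∀ x : ℤ, (p * s - q * r) ∣ x ↔ ((x : ZMod n) = 0) := by
    intro x
    rw [ZMod.intCast_zmod_eq_zero_iff_dvd, hndef, Int.natAbs_dvd]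
  have hFG : ∀ j : ℤ, F j = G (j : ZMod n) := by
    intro j
    rw [hG]
    simp only
    rw [hiff, hdvd_iff]
    push_cast
    simp [ZMod.natCast_val, ZMod.intCast_cast, ZMod.cast_id]
  have hrangeG : torusLine x₀ p q ∩ torusLine y₀ r s = Set.range G := by
    apply Set.Subset.antisymm
    · intro z hz
      obtain ⟨j, rfl⟩ := hsup hz
      exact ⟨(j : ZMod n), (hFG j).symm⟩
    · rintro _ ⟨k, rfl⟩
      exact hsub ⟨(k.val : ℤ), rfl⟩
  have hinjG : Function.Injective G := by
    intro k k' hkk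
    rw [hG] at hkk
    simp only at hkk
    rw [hiff, hdvd_iff] at hkk
    push_cast at hkk
    simp only [ZMod.natCast_val, ZMod.intCast_cast, ZMod.cast_id] at hkk
    exact (sub_eq_zero.mp hkk).symm
  rw [hrangeG, ← Set.image_univ, Set.ncard_image_of_injective _ hinjG, Set.ncard_univ,
    Nat.card_eq_fintype_card, ZMod.card]
end

section
/- Let φ be holomorphic on C with D(φf) = φ(D+n)f for all holomorphic f, where D = −(1/(2πi))d/dz and n > 0. Let N be a nilpotent endomorphism of a finite-dimensional complex vector space V. If f is holomorphic with f(z+τ) = φ(z)f(z), then w(z) := exp(DN/n)(f)(z)·v satisfies w(z+τ) = φ(z)·exp(N)·w(z) for every v ∈ V. -/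
/-!
Iterating the twisting rule `D(φg) = φ(D+n)g` gives `Dᵏ(φg) = φ Σᵢ C(k,i) nⁱ Dᵏ⁻ⁱg`, and since `D`
commutes with translation, periodicity of `f` turns this into a formula for `Dᵏf(z+τ)`. After
division by `k! nᵏ` the binomial coefficients become the Cauchy product of the coefficients of
`exp N` with those of `exp(DN/n) f`: this is `exp((D+n)N/n) = exp(N) exp(DN/n)`. Nilpotence of `N`
makes every series finitely supported.
-/

open Complex

/-- The differential operator `D = −(1/(2πi)) d/dz` on holomorphic functions. -/
noncomputable def Dop (f : ℂ → ℂ) : ℂ → ℂ :=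
  fun z => -(1 / (2 * Real.pi * Complex.I)) * deriv f z

open Finset

theorem differentiable_Dop {g : ℂ → ℂ} (hg : Differentiable ℂ g) : Differentiable ℂ (Dop g) :=
  (differentiable_const _).mul hg.deriv

theorem differentiable_iterate_Dop {g : ℂ → ℂ} (hg : Differentiable ℂ g) (k : ℕ) :
    Differentiable ℂ (Dop^[k] g) := by
  induction k with
  | zero => exact hg
  | succ k ih => rw [Function.iterate_succ_apply']; exact differentiable_Dop ih

theorem Dop_const_mul (c : ℂ) (g : ℂ → ℂ) : Dop (fun u => c * g u) = fun z => c * Dop g z := by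
  ext z
  simp only [Dop, deriv_const_mul_field']
  ring

theorem Dop_sum {ι : Type*} (s : Finset ι) {g : ι → ℂ → ℂ} {z : ℂ}
    (hg : ∀ i ∈ s, DifferentiableAt ℂ (g i) z) :
    Dop (fun u => ∑ i ∈ s, g i u) z = ∑ i ∈ s, Dop (g i) z := by
  rw [Dop, deriv_fun_sum hg, mul_sum]; rfl

theorem Dop_comp_add_const (τ : ℂ) (g : ℂ → ℂ) :
    Dop (fun u => g (u + τ)) = fun z => Dop g (z + τ) := by
  ext z
  simp only [Dop, deriv_comp_add_const]

theorem iterate_Dop_comp_add_const (τ : ℂ) (g : ℂ → ℂ) (k : ℕ) :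
    Dop^[k] (fun u => g (u + τ)) = fun z => Dop^[k] g (z + τ) :=
  (Function.Commute.iterate_left (f := Dop) (g := fun h u => h (u + τ))
    (fun h => Dop_comp_add_const τ h) k) g

theorem iterate_Dop_mul {φ g : ℂ → ℂ} {c : ℂ}
    (hrule : ∀ g : ℂ → ℂ, Differentiable ℂ g →
      ∀ z : ℂ, Dop (fun u => φ u * g u) z = φ z * (Dop g z + c * g z))
    (hg : Differentiable ℂ g) (k : ℕ) (z : ℂ) :
    Dop^[k] (fun u => φ u * g u) z =
      φ z * ∑ i ∈ range (k + 1), (k.choose i : ℂ) * (c ^ i * Dop^[k - i] g z) := by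
  induction k generalizing z with
  | zero => simp
  | succ k ih =>
    set S : ℂ → ℂ := fun u => ∑ i ∈ range (k + 1), (k.choose i : ℂ) * (c ^ i * Dop^[k - i] g u)
    have hterm : ∀ i, Differentiable ℂ fun u => (k.choose i : ℂ) * (c ^ i * Dop^[k - i] g u) :=
      fun i => (differentiable_const _).mul
        ((differentiable_const _).mul (differentiable_iterate_Dop hg _))
    have hDS : Dop S z = ∑ i ∈ range (k + 1), (k.choose i : ℂ) * (c ^ i * Dop^[k + 1 - i] g z) := by
      rw [Dop_sum _ fun i _ => (hterm i).differentiableAt]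
      refine sum_congr rfl fun i hi => ?_
      rw [Dop_const_mul, Dop_const_mul, Nat.sub_add_comm (Nat.lt_succ_iff.mp (mem_range.mp hi)),
        Function.iterate_succ_apply']
    rw [Function.iterate_succ_apply', funext ih,
      hrule S (Differentiable.fun_sum fun i _ => hterm i), hDS,
      sum_choose_succ_mul (fun i l => c ^ i * Dop^[l] g z)]
    simp only [S, mul_sum]
    congr 2
    exact sum_congr rfl fun i _ => by ring

section Cauchy

variable {𝕂 A : Type*} [RCLike 𝕂] [NormedRing A] [NormedAlgebra 𝕂 A]

theorem IsNilpotent.summable_smul_pow {x : A} (hx : IsNilpotent x) (c : ℕ → 𝕂) :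
    Summable (fun k => c k • x ^ k) ∧ Summable (fun k => ‖c k • x ^ k‖) := by
  obtain ⟨m, hm⟩ := hx
  have hvanish : ∀ k ∉ range m, c k • x ^ k = 0 := fun k hk => by
    rw [pow_eq_zero_of_le (by simpa using hk) hm, smul_zero]
  exact ⟨summable_of_ne_finset_zero hvanish,
    summable_of_ne_finset_zero fun k hk => by rw [hvanish k hk, norm_zero]⟩

theorem IsNilpotent.exp_mul_tsum_smul_pow {x : A} (hx : IsNilpotent x) (c : ℕ → 𝕂) :
    NormedSpace.exp x * ∑' j, c j • x ^ j =
      ∑' k, (∑ i ∈ range (k + 1), (i.factorial : 𝕂)⁻¹ * c (k - i)) • x ^ k := by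
  obtain ⟨hf, hf'⟩ := hx.summable_smul_pow fun i => (i.factorial : 𝕂)⁻¹
  obtain ⟨hg, hg'⟩ := hx.summable_smul_pow c
  rw [NormedSpace.exp_eq_tsum 𝕂, tsum_mul_tsum_eq_tsum_sum_range_of_summable_norm' hf' hf hg' hg]
  refine tsum_congr fun k => ?_
  rw [Finset.sum_smul]
  refine sum_congr rfl fun i hi => ?_
  rw [smul_mul_smul_comm, ← pow_add, Nat.add_sub_cancel' (Nat.lt_succ_iff.mp (mem_range.mp hi))]

end Cauchy

theorem ContinuousLinearMap.exp_apply_tsum_smul_pow_apply {𝕂 V : Type*} [RCLike 𝕂]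
    [NormedAddCommGroup V] [NormedSpace 𝕂 V] {N : V →L[𝕂] V} (hN : IsNilpotent N)
    (c : ℕ → 𝕂) (v : V) :
    NormedSpace.exp N (∑' j, c j • (N ^ j) v) =
      ∑' k, (∑ i ∈ range (k + 1), (i.factorial : 𝕂)⁻¹ * c (k - i)) • (N ^ k) v := by
  have happly : ∀ d : ℕ → 𝕂, ∑' k, d k • (N ^ k) v = (∑' k, d k • N ^ k) v := fun d =>
    ((ContinuousLinearMap.apply 𝕂 V v).map_tsum (hN.summable_smul_pow d).1).symm
  rw [happly, happly, ← hN.exp_mul_tsum_smul_pow]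
  rfl

theorem sum_choose_mul_pow_div_factorial_mul_pow {K : Type*} [Field K] [CharZero K] {c : K}
    (hc : c ≠ 0) (a : ℕ → K) (k : ℕ) :
    (∑ i ∈ range (k + 1), (k.choose i : K) * (c ^ i * a (k - i))) / (k.factorial * c ^ k) =
      ∑ i ∈ range (k + 1),
        (i.factorial : K)⁻¹ * (a (k - i) / ((k - i).factorial * c ^ (k - i))) := by
  rw [sum_div]
  refine sum_congr rfl fun i hi => ?_
  have hik : i ≤ k := Nat.lt_succ_iff.mp (mem_range.mp hi)
  have hfac : (k.choose i : K) * i.factorial * (k - i).factorial = k.factorial := by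
    exact_mod_cast Nat.choose_mul_factorial_mul_factorial hik
  have hchoose : (k.choose i : K) ≠ 0 := Nat.cast_ne_zero.mpr (Nat.choose_pos hik).ne'
  rw [← hfac, ← pow_mul_pow_sub c hik]
  field_simp

theorem section_of_twisted_bundle_general
    (V : Type*) [NormedAddCommGroup V] [NormedSpace ℂ V]
    (N : V →L[ℂ] V) (hN : IsNilpotent N) (n : ℕ) (hn : 0 < n) (τ : ℂ)
    (φ f : ℂ → ℂ) (hf : Differentiable ℂ f)
    (hrule : ∀ g : ℂ → ℂ, Differentiable ℂ g →
      ∀ z : ℂ, Dop (fun u => φ u * g u) z = φ z * (Dop g z + (n : ℂ) * g z))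
    (hper : ∀ z : ℂ, f (z + τ) = φ z * f z) (v : V) :
    ∀ z : ℂ,
      (∑' k : ℕ, ((Dop^[k] f (z + τ)) / ((k.factorial : ℂ) * (n : ℂ) ^ k)) • ((N ^ k) v)) =
        φ z • (NormedSpace.exp N)
          (∑' k : ℕ, ((Dop^[k] f z) / ((k.factorial : ℂ) * (n : ℂ) ^ k)) • ((N ^ k) v)) := by
  intro z
  have hcoef : ∀ k, Dop^[k] f (z + τ) / (k.factorial * (n : ℂ) ^ k) =
      φ z * ∑ i ∈ range (k + 1), (i.factorial : ℂ)⁻¹ *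
        (Dop^[k - i] f z / ((k - i).factorial * (n : ℂ) ^ (k - i))) := fun k => by
    rw [← congrFun (iterate_Dop_comp_add_const τ f k) z, funext hper, iterate_Dop_mul hrule hf,
      mul_div_assoc, sum_choose_mul_pow_div_factorial_mul_pow (Nat.cast_ne_zero.mpr hn.ne')
      (fun j => Dop^[j] f z)]
  simp_rw [hcoef, mul_smul]
  rw [tsum_const_smul'', ContinuousLinearMap.exp_apply_tsum_smul_pow_apply hN]

/-- If `f(z+τ) = φ(z)f(z)` and `D(φg) = φ(D+n)g` for all holomorphic `g`, then for a
nilpotent endomorphism `N` of a finite-dimensional complex vector space `V` and any `v ∈ V`,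
the function `w(z) = exp(DN/n)(f)(z)·v = Σ_k (1/(k! nᵏ)) Dᵏf(z) · Nᵏ v` satisfies
`w(z+τ) = φ(z)·exp(N)·w(z)`. -/
theorem section_of_twisted_bundle
    (V : Type*) [NormedAddCommGroup V] [NormedSpace ℂ V] [FiniteDimensional ℂ V]
    (N : V →L[ℂ] V) (hN : IsNilpotent N) (n : ℕ) (hn : 0 < n) (τ : ℂ)
    (φ f : ℂ → ℂ) (hφ : Differentiable ℂ φ) (hf : Differentiable ℂ f)
    (hrule : ∀ g : ℂ → ℂ, Differentiable ℂ g →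
      ∀ z : ℂ, Dop (fun u => φ u * g u) z = φ z * (Dop g z + (n : ℂ) * g z))
    (hper : ∀ z : ℂ, f (z + τ) = φ z * f z) (v : V) :
    ∀ z : ℂ,
      (∑' k : ℕ, ((Dop^[k] f (z + τ)) / ((k.factorial : ℂ) * (n : ℂ) ^ k)) • ((N ^ k) v)) =
        φ z • (NormedSpace.exp N)
          (∑' k : ℕ, ((Dop^[k] f z) / ((k.factorial : ℂ) * (n : ℂ) ^ k)) • ((N ^ k) v)) :=
  section_of_twisted_bundle_general V N hN n hn τ φ f hf hrule hper v
end
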